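/- Let Λ_1, ..., Λ_n be i.i.d. Bernoulli(π) with π ∈ (0,1), and let γ ≥ 1 be an integer. Then limsup_{n→∞} E[ n^γ / ((n − 1 − Σ_{i=1}^n Λ_i) ∨ 1)^γ ] ≤ 1/(1−π)^γ. -/

import Mathlib

open MeasureTheory ProbabilityTheory Filter
open scoped ENNReal Classical BigOperators

noncomputable section

variable {Ω : Type*}

/-- The Bernoulli(π) law on ℝ, i.e. `(1-π)δ₀ + πδ₁`. -/
def bernoulliLaw (π : ℝ) : Measure ℝ :=
  ENNReal.ofReal (1 - π) • Measure.dirac (0 : ℝ) + ENNReal.ofReal π • Measure.dirac 1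

open Topology

/-!
On the event `∑ i < n, Λ i < n (π + ε)` the integrand is at most `n^γ / (n (1 - π - ε) - 1)^γ`,
which tends to `1 / (1 - π - ε)^γ`. Everywhere the integrand is at most `n^γ`, and by Hoeffding's
inequality the complementary event has probability at most `exp (-2 ε²)^n`, which beats the
polynomial factor. Letting `ε → 0` gives the bound.
-/

section Bernoulli

lemma bernoulliLaw_compl_Icc (π : ℝ) : bernoulliLaw π (Set.Icc 0 1)ᶜ = 0 := by
  simp [bernoulliLaw, Measure.dirac_apply' _ measurableSet_Icc.compl]

variable {π : ℝ}

lemma integral_bernoulliLaw (h0 : 0 ≤ π) (h1 : π ≤ 1) (f : ℝ → ℝ) :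
    ∫ x, f x ∂bernoulliLaw π = (1 - π) * f 0 + π * f 1 := by
  have hint (a : ℝ) (c : ℝ≥0∞) (hc : c ≠ ∞) : Integrable f (c • Measure.dirac a) :=
    ((integrable_const (f a)).congr (ae_eq_dirac f).symm).smul_measure hc
  rw [bernoulliLaw, integral_add_measure (hint _ _ ENNReal.ofReal_ne_top)
      (hint _ _ ENNReal.ofReal_ne_top), integral_smul_measure, integral_smul_measure,
    integral_dirac, integral_dirac, ENNReal.toReal_ofReal (by linarith),
    ENNReal.toReal_ofReal h0, smul_eq_mul, smul_eq_mul]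

variable [MeasurableSpace Ω] {P : Measure Ω} {X : Ω → ℝ}

lemma ae_mem_Icc_of_map_eq_bernoulliLaw (hX : AEMeasurable X P)
    (hlaw : P.map X = bernoulliLaw π) : ∀ᵐ ω ∂P, X ω ∈ Set.Icc 0 1 :=
  ae_of_ae_map hX <| hlaw ▸ (measure_eq_zero_iff_ae_notMem.mp (bernoulliLaw_compl_Icc π)).mono
    fun _ h => not_not.mp h

lemma integral_eq_of_map_eq_bernoulliLaw (hX : AEMeasurable X P)
    (hlaw : P.map X = bernoulliLaw π) (h0 : 0 ≤ π) (h1 : π ≤ 1) : P[X] = π := by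
  have := integral_map hX (f := id) aestronglyMeasurable_id
  rw [hlaw, integral_bernoulliLaw h0 h1] at this
  simpa using this.symm

end Bernoulli

section Hoeffding

variable [MeasurableSpace Ω] {P : Measure Ω} [IsProbabilityMeasure P] {X : ℕ → Ω → ℝ} {m : ℝ}

lemma measureReal_sum_range_ge_le_of_mem_Icc (hindep : iIndepFun X P)
    (hmeas : ∀ i, AEMeasurable (X i) P) (hbdd : ∀ i, ∀ᵐ ω ∂P, X i ω ∈ Set.Icc 0 1)
    (hmean : ∀ i, P[X i] = m) {ε : ℝ} (hε : 0 ≤ ε) (n : ℕ) :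
    P.real {ω | n * (m + ε) ≤ ∑ i ∈ Finset.range n, X i ω} ≤ Real.exp (-2 * ε ^ 2) ^ n := by
  have hsub : ∀ i, HasSubgaussianMGF (fun ω ↦ X i ω - m) (1 / 4) P := fun i => by
    convert hasSubgaussianMGF_of_mem_Icc (hmeas i) (hbdd i) using 2
    · rw [hmean i]
    · norm_num
  have hindep' : iIndepFun (fun i ω ↦ X i ω - m) P :=
    hindep.comp (fun _ x => x - m) fun _ => measurable_sub_const m
  have hset : {ω | n * (m + ε) ≤ ∑ i ∈ Finset.range n, X i ω}
      = {ω | n * ε ≤ ∑ i ∈ Finset.range n, (X i ω - m)} := by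
    ext ω
    simp only [Set.mem_ofPred_eq, Finset.sum_sub_distrib, Finset.sum_const, Finset.card_range,
      nsmul_eq_mul]
    constructor <;> intro h <;> linarith
  rw [hset]
  refine (HasSubgaussianMGF.measure_sum_range_ge_le_of_iIndepFun hindep' (fun i _ => hsub i)
    (by positivity)).trans_eq ?_
  rw [← Real.exp_nat_mul]
  rcases n.eq_zero_or_pos with rfl | hn
  · simp
  · congr 1
    field_simp
    push_cast
    ring

end Hoeffding

section Estimates

lemma pow_div_max_pow_le {n : ℝ} (hn : 0 ≤ n) (s : ℝ) (γ : ℕ) :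
    n ^ γ / max (n - 1 - s) 1 ^ γ ≤ n ^ γ :=
  div_le_self (by positivity) (one_le_pow₀ (le_max_right _ _))

lemma pow_div_max_pow_le_of_le {n s t : ℝ} (hn : 0 ≤ n) (ht : 0 < n - 1 - t) (hs : s ≤ t)
    (γ : ℕ) : n ^ γ / max (n - 1 - s) 1 ^ γ ≤ n ^ γ / (n - 1 - t) ^ γ := by
  gcongr
  exact le_max_of_le_left (by linarith)

variable [MeasurableSpace Ω] {P : Measure Ω} [IsProbabilityMeasure P]

lemma integral_le_add_mul_measureReal {f : Ω → ℝ} {B : Set Ω} (hB : MeasurableSet B)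
    {K M : ℝ} (hK : 0 ≤ K) (hf0 : ∀ ω, 0 ≤ f ω) (hfM : ∀ ω, f ω ≤ M)
    (hfK : ∀ ω ∉ B, f ω ≤ K) : ∫ ω, f ω ∂P ≤ K + M * P.real B := by
  have hle : ∀ ω, f ω ≤ K + B.indicator (fun _ => M) ω := fun ω => by
    by_cases hω : ω ∈ B
    · rw [Set.indicator_of_mem hω]; linarith [hfM ω]
    · rw [Set.indicator_of_notMem hω]; linarith [hfK ω hω]
  calc ∫ ω, f ω ∂P ≤ ∫ ω, (K + B.indicator (fun _ => M) ω) ∂P :=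
        integral_mono_of_nonneg (.of_forall hf0)
          ((integrable_const K).add ((integrable_const M).indicator hB)) (.of_forall hle)
    _ = K + M * P.real B := by
        rw [integral_add (integrable_const K) ((integrable_const M).indicator hB),
          integral_const, integral_indicator_const M hB]
        simp [mul_comm]

variable {X : ℕ → Ω → ℝ} {m : ℝ}

lemma integral_pow_div_max_pow_le (hindep : iIndepFun X P) (hmeas : ∀ i, Measurable (X i))
    (hbdd : ∀ i, ∀ᵐ ω ∂P, X i ω ∈ Set.Icc 0 1) (hmean : ∀ i, P[X i] = m)
    {ε : ℝ} (hε : 0 ≤ ε) (γ : ℕ) {n : ℕ} (hn : 0 < n * (1 - m - ε) - 1) :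
    ∫ ω, (n : ℝ) ^ γ / max (n - 1 - ∑ i ∈ Finset.range n, X i ω) 1 ^ γ ∂P
      ≤ (n : ℝ) ^ γ / (n * (1 - m - ε) - 1) ^ γ + n ^ γ * Real.exp (-2 * ε ^ 2) ^ n := by
  have hS : Measurable fun ω => ∑ i ∈ Finset.range n, X i ω :=
    Finset.measurable_sum _ fun i _ => hmeas i
  have hdev : n - 1 - n * (m + ε) = n * (1 - m - ε) - 1 := by ring
  refine (integral_le_add_mul_measureReal
    (measurableSet_le (measurable_const (a := (n : ℝ) * (m + ε))) hS)
    (K := (n : ℝ) ^ γ / (n * (1 - m - ε) - 1) ^ γ) (by positivity) (fun ω => by positivity)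
    (fun ω => pow_div_max_pow_le n.cast_nonneg _ γ) fun ω hω => ?_).trans ?_
  · rw [← hdev]
    exact pow_div_max_pow_le_of_le n.cast_nonneg (hdev ▸ hn) (not_le.mp hω).le γ
  · gcongr
    exact measureReal_sum_range_ge_le_of_mem_Icc hindep (fun i => (hmeas i).aemeasurable) hbdd
      hmean hε n

end Estimates

lemma tendsto_pow_div_mul_sub_one_pow {c : ℝ} (hc : 0 < c) (γ : ℕ) :
    Tendsto (fun n : ℕ => (n : ℝ) ^ γ / (n * c - 1) ^ γ) atTop (𝓝 (1 / c ^ γ)) := by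
  have hlim : Tendsto (fun n : ℕ => (n : ℝ) / (n * c - 1)) atTop (𝓝 (1 / c)) := by
    have hden : Tendsto (fun n : ℕ => c - 1 / (n : ℝ)) atTop (𝓝 c) := by
      simpa using (tendsto_const_nhds (x := c)).sub tendsto_one_div_atTop_nhds_zero_nat
    refine (tendsto_const_nhds.div hden hc.ne').congr' ?_
    filter_upwards [eventually_gt_atTop 0] with n hn
    have : (0 : ℝ) < n := by exact_mod_cast hn
    simp only [Pi.div_apply]
    field_simp
  simpa [div_pow] using hlim.pow γ

section Limsup

variable [MeasurableSpace Ω] {P : Measure Ω} [IsProbabilityMeasure P] {X : ℕ → Ω → ℝ} {m : ℝ}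

lemma limsup_integral_pow_div_max_pow_le_of_lt (hindep : iIndepFun X P)
    (hmeas : ∀ i, Measurable (X i)) (hbdd : ∀ i, ∀ᵐ ω ∂P, X i ω ∈ Set.Icc 0 1)
    (hmean : ∀ i, P[X i] = m) (γ : ℕ) {ε : ℝ} (hε : 0 < ε) (hεm : ε < 1 - m) :
    limsup (fun n : ℕ =>
        ∫ ω, (n : ℝ) ^ γ / max (n - 1 - ∑ i ∈ Finset.range n, X i ω) 1 ^ γ ∂P) atTop
      ≤ 1 / (1 - m - ε) ^ γ := by
  set c := 1 - m - ε
  have hc : 0 < c := by linarith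
  have hr : Real.exp (-2 * ε ^ 2) < 1 := Real.exp_lt_one_iff.mpr (by nlinarith)
  have hbound : Tendsto (fun n : ℕ => (n : ℝ) ^ γ / (n * c - 1) ^ γ
      + n ^ γ * Real.exp (-2 * ε ^ 2) ^ n) atTop (𝓝 (1 / c ^ γ + 0)) :=
    (tendsto_pow_div_mul_sub_one_pow hc γ).add
      (tendsto_pow_const_mul_const_pow_of_lt_one γ (Real.exp_pos _).le hr)
  have hle : ∀ᶠ n : ℕ in atTop,
      ∫ ω, (n : ℝ) ^ γ / max (n - 1 - ∑ i ∈ Finset.range n, X i ω) 1 ^ γ ∂P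
        ≤ (n : ℝ) ^ γ / (n * c - 1) ^ γ + n ^ γ * Real.exp (-2 * ε ^ 2) ^ n := by
    filter_upwards [(tendsto_natCast_atTop_atTop.atTop_mul_const hc).eventually_gt_atTop 1]
      with n hn
    exact integral_pow_div_max_pow_le hindep hmeas hbdd hmean hε.le γ (by linarith)
  calc _ ≤ limsup (fun n : ℕ => (n : ℝ) ^ γ / (n * c - 1) ^ γ
        + n ^ γ * Real.exp (-2 * ε ^ 2) ^ n) atTop :=
        limsup_le_limsup hle (isCoboundedUnder_le_of_le atTop fun n =>
          integral_nonneg fun ω => by positivity) hbound.isBoundedUnder_le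
    _ = 1 / c ^ γ := by rw [hbound.limsup_eq, add_zero]

lemma limsup_integral_pow_div_max_pow_le (hindep : iIndepFun X P)
    (hmeas : ∀ i, Measurable (X i)) (hbdd : ∀ i, ∀ᵐ ω ∂P, X i ω ∈ Set.Icc 0 1)
    (hmean : ∀ i, P[X i] = m) (hm : m < 1) (γ : ℕ) :
    limsup (fun n : ℕ =>
        ∫ ω, (n : ℝ) ^ γ / max (n - 1 - ∑ i ∈ Finset.range n, X i ω) 1 ^ γ ∂P) atTop
      ≤ 1 / (1 - m) ^ γ := by
  have hcont : Tendsto (fun ε : ℝ => 1 / (1 - m - ε) ^ γ) (𝓝[>] 0) (𝓝 (1 / (1 - m) ^ γ)) := by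
    refine tendsto_nhdsWithin_of_tendsto_nhds ?_
    have : ContinuousAt (fun ε : ℝ => 1 / (1 - m - ε) ^ γ) 0 := by
      refine continuousAt_const.div (by fun_prop) (pow_ne_zero γ ?_)
      linarith
    simpa using this.tendsto
  refine ge_of_tendsto hcont ?_
  filter_upwards [Ioo_mem_nhdsGT (sub_pos.mpr hm)] with ε hε
  exact limsup_integral_pow_div_max_pow_le_of_lt hindep hmeas hbdd hmean γ hε.1 hε.2

end Limsup

theorem stmt7_general [MeasurableSpace Ω] (P : Measure Ω) [IsProbabilityMeasure P]
    (Λ : ℕ → Ω → ℝ) (hmeas : ∀ i, Measurable (Λ i))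
    (π : ℝ) (hπ : π ∈ Set.Ioo (0 : ℝ) 1)
    (γ : ℕ)
    (hiid : iIndepFun Λ P)
    (hlaw : ∀ i, Measure.map (Λ i) P = bernoulliLaw π) :
    limsup (fun n : ℕ =>
        ∫ ω, (n : ℝ) ^ γ /
          (max ((n : ℝ) - 1 - ∑ i ∈ Finset.range n, Λ i ω) 1) ^ γ ∂P)
      atTop ≤ 1 / (1 - π) ^ γ :=
  limsup_integral_pow_div_max_pow_le hiid hmeas
    (fun i => ae_mem_Icc_of_map_eq_bernoulliLaw (hmeas i).aemeasurable (hlaw i))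
    (fun i => integral_eq_of_map_eq_bernoulliLaw (hmeas i).aemeasurable (hlaw i) hπ.1.le hπ.2.le)
    hπ.2 γ

/-- for i.i.d. Bernoulli(π) variables and any integer `γ ≥ 1`,
`limsup_n E[ n^γ / ((n − 1 − ΣΛᵢ) ∨ 1)^γ ] ≤ 1/(1−π)^γ`. -/
theorem stmt7 [MeasurableSpace Ω] (P : Measure Ω) [IsProbabilityMeasure P]
    (Λ : ℕ → Ω → ℝ) (hmeas : ∀ i, Measurable (Λ i))
    (π : ℝ) (hπ : π ∈ Set.Ioo (0 : ℝ) 1)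
    (γ : ℕ) (hγ : 1 ≤ γ)
    (hiid : iIndepFun Λ P)
    (hlaw : ∀ i, Measure.map (Λ i) P = bernoulliLaw π) :
    limsup (fun n : ℕ =>
        ∫ ω, (n : ℝ) ^ γ /
          (max ((n : ℝ) - 1 - ∑ i ∈ Finset.range n, Λ i ω) 1) ^ γ ∂P)
      atTop ≤ 1 / (1 - π) ^ γ :=
  stmt7_general P Λ hmeas π hπ γ hiid hlaw
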